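/- arXiv:1409.2316 — 3 statements merged into one kernel-verified Lean document; each statement's English description precedes it below -/
import Mathlib

section
/- Let n ≥ 2, c > 0, and let λ_1 > … > λ_n be real numbers with λ_k − λ_{k+1} = c and λ_k = −λ_{n+1−k} for all k. Let d_1, …, d_n be positive integers with d_k ≤ d_{k+1} for 1 ≤ k ≤ ⌊n/2⌋ and d_k = d_{n+1−k} for all k (set d_0 := 0). For 1 ≤ k ≤ n−1 define the d_{k+1} × d_k matrix D_k whose (p,p) entry, for 1 ≤ p ≤ d_k, is √( (c/2)·Σ_{i=j(p)}^{k} λ_i ), where j(p) := min{ j : d_j ≥ p }, and whose other entries are zero. Then every partial sum Σ_{i=j(p)}^{k} λ_i appearing under a square root is nonnegative, and with the convention D_0 = 0 and D_n = 0 these matrices satisfy the recurrence D_k† D_k − D_{k−1} D_{k−1}† = (c λ_k / 2)·I_{d_k} for every 1 ≤ k ≤ n. -/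
/-!
The gap and the symmetry force `λ_k = c (n + 1 - 2k) / 2`, hence
`∑_{i=j}^{m} λ_i = c (m + 1 - j)(n + 1 - j - m) / 2`. Since `d` increases up to the middle and is
palindromic, `p ≤ d_m` holds exactly for `j(p) ≤ m ≤ n + 1 - j(p)`, which makes the partial sums
under the square roots nonnegative. Each `D_k` is a rectangular diagonal matrix, so `D_k† D_k` and
`D_k D_k†` are diagonal with the same entries `(c/2) ∑_{i=j(q)}^{k} λ_i`; one step outside the
window both these entries and the closed form vanish. The recurrence thus reduces to the
difference of two consecutive closed forms, which is `λ_{k+1}`.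
-/

open Matrix

/-- The index `j(p) = min { j : d j ≥ p }` (with `p` one-based). -/
noncomputable def firstBigEnough (d : ℕ → ℕ) (p : ℕ) : ℕ := sInf {j : ℕ | p ≤ d j}

/-- The `d (k+1) × d k` matrix `D_k` whose `(p,p)` entry for `1 ≤ p ≤ d k` is
`√((c/2) · Σ_{i = j(p)}^{k} λ i)` and whose other entries vanish; by convention `D_k = 0`
unless `1 ≤ k ≤ n - 1`. -/
noncomputable def Dmat (n : ℕ) (c : ℝ) (lam : ℕ → ℝ) (d : ℕ → ℕ) (k : ℕ) :
    Matrix (Fin (d (k + 1))) (Fin (d k)) ℂ :=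
  Matrix.of fun p q =>
    if 1 ≤ k ∧ k ≤ n - 1 ∧ (p : ℕ) = (q : ℕ) then
      ((Real.sqrt ((c / 2) * ∑ i ∈ Finset.Icc (firstBigEnough d ((q : ℕ) + 1)) k, lam i) : ℝ) : ℂ)
    else 0

theorem lam_eq_of_gap_of_antisymm {n : ℕ} {c : ℝ} {lam : ℕ → ℝ}
    (hgap : ∀ k, 1 ≤ k → k ≤ n - 1 → lam k - lam (k + 1) = c)
    (hsym : ∀ k, 1 ≤ k → k ≤ n → lam k = -lam (n + 1 - k)) :
    ∀ k, 1 ≤ k → k ≤ n → lam k = c * ((n : ℝ) + 1 - 2 * k) / 2 := by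
  have hstep : ∀ k, 1 ≤ k → k ≤ n → lam k = lam 1 - ((k : ℝ) - 1) * c := by
    intro k hk
    induction k, hk using Nat.le_induction with
    | base => intro _; ring
    | succ k hk ih =>
      intro hkn
      have := hgap k hk (by omega)
      push_cast
      linarith [ih (by omega)]
  intro k hk hkn
  have hfirst : lam 1 = ((n : ℝ) - 1) * c / 2 := by
    have h := hsym 1 le_rfl (hk.trans hkn)
    rw [Nat.add_sub_cancel, hstep n (hk.trans hkn) le_rfl] at h
    linarith
  rw [hstep k hk hkn, hfirst]
  ring

/-- The value of `∑ i ∈ Icc j m, λ i` when `λ k = c (n + 1 - 2k) / 2`. -/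
noncomputable def arithPartialSum (n : ℕ) (c : ℝ) (j m : ℕ) : ℝ :=
  c * ((m : ℝ) + 1 - j) * ((n : ℝ) + 1 - j - m) / 2

theorem arithPartialSum_nonneg {n : ℕ} {c : ℝ} {j m : ℕ} (hc : 0 ≤ c) (hjm : j ≤ m + 1)
    (hmj : m + j ≤ n + 1) : 0 ≤ arithPartialSum n c j m := by
  have h₁ : (j : ℝ) ≤ m + 1 := by exact_mod_cast hjm
  have h₂ : (m : ℝ) + j ≤ n + 1 := by exact_mod_cast hmj
  unfold arithPartialSum
  have := mul_nonneg (mul_nonneg hc (sub_nonneg.mpr h₁)) (sub_nonneg.mpr h₂)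
  linarith

theorem sum_Icc_eq_arithPartialSum {n : ℕ} {c : ℝ} {lam : ℕ → ℝ}
    (hlam : ∀ k, 1 ≤ k → k ≤ n → lam k = c * ((n : ℝ) + 1 - 2 * k) / 2)
    {j m : ℕ} (hj : 1 ≤ j) (hjm : j ≤ m + 1) (hmn : m ≤ n) :
    ∑ i ∈ Finset.Icc j m, lam i = arithPartialSum n c j m := by
  obtain ⟨j, rfl⟩ : ∃ i, j = i + 1 := ⟨j - 1, by omega⟩
  induction m, (show j ≤ m by omega) using Nat.le_induction with
  | base => simp [arithPartialSum]
  | succ m hm ih =>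
    rw [Finset.sum_Icc_succ_top (by omega), ih (by omega) (by omega), hlam (m + 1) (by omega) hmn,
      arithPartialSum, arithPartialSum]
    push_cast
    ring

theorem firstBigEnough_spec {n : ℕ} {d : ℕ → ℕ} (hd0 : d 0 = 0)
    (hmono : ∀ k, 1 ≤ k → k ≤ n / 2 → d k ≤ d (k + 1))
    (hdsym : ∀ k, 1 ≤ k → k ≤ n → d k = d (n + 1 - k))
    {p w : ℕ} (hp : 1 ≤ p) (hpw : p ≤ d w) :
    1 ≤ firstBigEnough d p ∧ ∀ m, 1 ≤ m → m ≤ n →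
      (p ≤ d m ↔ firstBigEnough d p ≤ m ∧ m + firstBigEnough d p ≤ n + 1) := by
  have hmonoOn : MonotoneOn d (Set.Icc 1 (n / 2 + 1)) :=
    monotoneOn_of_le_add_one Set.ordConnected_Icc fun k _ hk _ ↦ hmono k hk.1 (by grind)
  have hj : p ≤ d (firstBigEnough d p) := Nat.sInf_mem (s := {j | p ≤ d j}) ⟨w, hpw⟩
  have hmin : ∀ m, p ≤ d m → firstBigEnough d p ≤ m := fun m hm ↦ Nat.sInf_le hm
  set j := firstBigEnough d p
  have hj1 : 1 ≤ j := Nat.one_le_iff_ne_zero.mpr fun h ↦ by rw [h, hd0] at hj; omega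
  refine ⟨hj1, fun m hm1 hmn ↦ ⟨fun hpm ↦ ?_, fun ⟨hjm, hmj⟩ ↦ ?_⟩⟩
  · have := hmin m hpm
    have := hmin (n + 1 - m) (hdsym m hm1 hmn ▸ hpm)
    omega
  · rcases le_total m (n + 1 - m) with h | h
    · exact hj.trans (hmonoOn ⟨hj1, by omega⟩ ⟨by omega, by omega⟩ hjm)
    · rw [hdsym m hm1 hmn]
      exact hj.trans (hmonoOn ⟨hj1, by omega⟩ ⟨by omega, by omega⟩ (by omega))

section RectDiagonal

variable {R : Type*} [CommSemiring R] [StarRing R] {a b : ℕ}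

def rectDiagonal (a b : ℕ) (f : ℕ → R) : Matrix (Fin a) (Fin b) R :=
  of fun p q ↦ if (p : ℕ) = q then f q else 0

theorem rectDiagonal_conjTranspose (f : ℕ → R) :
    (rectDiagonal a b f)ᴴ = rectDiagonal b a (star ∘ f) := by
  ext q p
  by_cases h : (q : ℕ) = p <;> simp [rectDiagonal, h, eq_comm]

theorem rectDiagonal_conjTranspose_mul_self (f : ℕ → R) :
    (rectDiagonal a b f)ᴴ * rectDiagonal a b f =
      diagonal fun q : Fin b ↦ if (q : ℕ) < a ∧ (q : ℕ) < b then star (f q) * f q else 0 := by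
  ext q r
  rw [mul_apply, diagonal_apply]
  by_cases hqa : (q : ℕ) < a
  · rw [Finset.sum_eq_single ⟨q, hqa⟩ (fun p _ hp ↦ by simp [rectDiagonal, Fin.ext_iff.not.mp hp])
      (by simp)]
    obtain rfl | hqr := eq_or_ne q r
    · simp [rectDiagonal, hqa]
    · simp [rectDiagonal, hqr, Fin.val_inj]
  · have : ∀ p : Fin a, (p : ℕ) ≠ q := fun p h ↦ hqa (h ▸ p.isLt)
    simp [rectDiagonal, hqa, this]

theorem rectDiagonal_mul_conjTranspose_self (f : ℕ → R) :
    rectDiagonal a b f * (rectDiagonal a b f)ᴴ =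
      diagonal fun p : Fin a ↦ if (p : ℕ) < a ∧ (p : ℕ) < b then star (f p) * f p else 0 := by
  have h := rectDiagonal_conjTranspose_mul_self (a := b) (b := a) (star ∘ f)
  rw [← rectDiagonal_conjTranspose, conjTranspose_conjTranspose] at h
  rw [h]
  congr 1
  funext p
  simp [and_comm, mul_comm]

end RectDiagonal

section Dmat

variable {n : ℕ} {c : ℝ} {lam : ℕ → ℝ} {d : ℕ → ℕ}

/-- The `(q, q)` entry of `D_k`, with `q` zero-based as in `Dmat`. -/
noncomputable def Dentry (n : ℕ) (c : ℝ) (lam : ℕ → ℝ) (d : ℕ → ℕ) (k q : ℕ) : ℝ :=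
  if 1 ≤ k ∧ k ≤ n - 1 then √((c / 2) * ∑ i ∈ Finset.Icc (firstBigEnough d (q + 1)) k, lam i)
  else 0

noncomputable def gramEntry (n : ℕ) (c : ℝ) (lam : ℕ → ℝ) (d : ℕ → ℕ) (k q : ℕ) : ℝ :=
  if q < d (k + 1) ∧ q < d k then Dentry n c lam d k q ^ 2 else 0

theorem Dmat_eq_rectDiagonal (k : ℕ) :
    Dmat n c lam d k = rectDiagonal _ _ fun q ↦ (Dentry n c lam d k q : ℂ) := by
  ext p q
  by_cases hk : 1 ≤ k ∧ k ≤ n - 1 <;> by_cases hpq : (p : ℕ) = q <;>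
    simp [Dmat, rectDiagonal, Dentry, hk, hpq]

theorem Dmat_conjTranspose_mul_self (k : ℕ) :
    (Dmat n c lam d k)ᴴ * Dmat n c lam d k =
      diagonal fun q : Fin (d k) ↦ (gramEntry n c lam d k q : ℂ) := by
  rw [Dmat_eq_rectDiagonal, rectDiagonal_conjTranspose_mul_self]
  congr 1
  funext q
  simp [gramEntry, apply_ite (fun x : ℝ ↦ (x : ℂ)), sq]

theorem Dmat_mul_conjTranspose_self (k : ℕ) :
    Dmat n c lam d k * (Dmat n c lam d k)ᴴ =
      diagonal fun p : Fin (d (k + 1)) ↦ (gramEntry n c lam d k p : ℂ) := by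
  rw [Dmat_eq_rectDiagonal, rectDiagonal_mul_conjTranspose_self]
  congr 1
  funext q
  simp [gramEntry, apply_ite (fun x : ℝ ↦ (x : ℂ)), sq]

theorem gramEntry_eq (hc : 0 ≤ c)
    (hlam : ∀ k, 1 ≤ k → k ≤ n → lam k = c * ((n : ℝ) + 1 - 2 * k) / 2)
    (hd0 : d 0 = 0) (hmono : ∀ k, 1 ≤ k → k ≤ n / 2 → d k ≤ d (k + 1))
    (hdsym : ∀ k, 1 ≤ k → k ≤ n → d k = d (n + 1 - k))
    {q m w : ℕ} (hqw : q < d w) (hw1 : 1 ≤ w) (hwn : w ≤ n) (hmw : m ≤ w) (hwm : w ≤ m + 1) :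
    gramEntry n c lam d m q = c / 2 * arithPartialSum n c (firstBigEnough d (q + 1)) m := by
  obtain ⟨hj1, hwin⟩ := firstBigEnough_spec hd0 hmono hdsym (Nat.succ_pos q) hqw
  have hjw := (hwin w hw1 hwn).mp hqw
  set j := firstBigEnough d (q + 1)
  unfold gramEntry Dentry
  by_cases h : (q < d (m + 1) ∧ q < d m) ∧ (1 ≤ m ∧ m ≤ n - 1)
  · have hjm := ((hwin m h.2.1 (by omega)).mp h.1.2).1
    rw [if_pos h.1, if_pos h.2, sum_Icc_eq_arithPartialSum hlam hj1 (by omega) (by omega),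
      Real.sq_sqrt (mul_nonneg (by positivity) (arithPartialSum_nonneg hc (by omega) (by omega)))]
  · -- `m` lies just outside the window `[j, n + 1 - j]`, on whose edges the closed form vanishes.
    have hedge : m + 1 = j ∨ m + j = n + 1 := by
      have hwin_m := hwin m
      have hwin_succ := hwin (m + 1)
      omega
    have hzero : arithPartialSum n c j m = 0 := by
      unfold arithPartialSum
      rcases hedge with h | h
      · rw [show (j : ℝ) = m + 1 by exact_mod_cast h.symm]; ring
      · rw [show (n : ℝ) + 1 = m + j by exact_mod_cast h.symm]; ring
    rw [hzero, mul_zero]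
    split_ifs <;> first | tauto | simp

theorem gramEntry_succ_sub_gramEntry (hc : 0 ≤ c)
    (hlam : ∀ k, 1 ≤ k → k ≤ n → lam k = c * ((n : ℝ) + 1 - 2 * k) / 2)
    (hd0 : d 0 = 0) (hmono : ∀ k, 1 ≤ k → k ≤ n / 2 → d k ≤ d (k + 1))
    (hdsym : ∀ k, 1 ≤ k → k ≤ n → d k = d (n + 1 - k))
    {k q : ℕ} (hkn : k + 1 ≤ n) (hq : q < d (k + 1)) :
    gramEntry n c lam d (k + 1) q - gramEntry n c lam d k q = c * lam (k + 1) / 2 := by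
  rw [gramEntry_eq hc hlam hd0 hmono hdsym hq (by omega) hkn le_rfl (by omega),
    gramEntry_eq hc hlam hd0 hmono hdsym hq (by omega) hkn (by omega) le_rfl,
    hlam (k + 1) (by omega) hkn, arithPartialSum, arithPartialSum]
  push_cast
  ring

end Dmat

theorem Dmat_recurrence_general
    (n : ℕ) (c : ℝ) (hc : 0 < c) (lam : ℕ → ℝ) (d : ℕ → ℕ)
    (hgap : ∀ k, 1 ≤ k → k ≤ n - 1 → lam k - lam (k + 1) = c)
    (hsym : ∀ k, 1 ≤ k → k ≤ n → lam k = -lam (n + 1 - k))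
    (hd0 : d 0 = 0)
    (hmono : ∀ k, 1 ≤ k → k ≤ n / 2 → d k ≤ d (k + 1))
    (hdsym : ∀ k, 1 ≤ k → k ≤ n → d k = d (n + 1 - k)) :
    (∀ k, 1 ≤ k → k ≤ n - 1 → ∀ q : Fin (d k),
      0 ≤ ∑ i ∈ Finset.Icc (firstBigEnough d ((q : ℕ) + 1)) k, lam i) ∧
    (∀ k : ℕ, k + 1 ≤ n →
      (Dmat n c lam d (k + 1))ᴴ * Dmat n c lam d (k + 1) -
        Dmat n c lam d k * (Dmat n c lam d k)ᴴ =
      ((c * lam (k + 1) / 2 : ℝ) : ℂ) • 1) := by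
  have hlam := lam_eq_of_gap_of_antisymm hgap hsym
  refine ⟨fun k hk1 hkn q ↦ ?_, fun k hkn ↦ ?_⟩
  · obtain ⟨hj1, hwin⟩ := firstBigEnough_spec hd0 hmono hdsym (Nat.succ_pos q) q.isLt
    obtain ⟨hjk, hkj⟩ := (hwin k hk1 (by omega)).mp q.isLt
    rw [sum_Icc_eq_arithPartialSum hlam hj1 (by omega) (by omega)]
    exact arithPartialSum_nonneg hc.le (by omega) (by omega)
  · rw [Dmat_conjTranspose_mul_self, Dmat_mul_conjTranspose_self, diagonal_sub,
      smul_one_eq_diagonal]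
    congr 1
    funext q
    exact_mod_cast gramEntry_succ_sub_gramEntry hc.le hlam hd0 hmono hdsym hkn q.isLt

/-- Under the homogeneously gapped, symmetric spectrum `λ 1 > … > λ n`
with gap `c > 0` and multiplicities `d 1, …, d n` satisfying `d k ≤ d (k+1)` for
`1 ≤ k ≤ ⌊n/2⌋`, `d k = d (n+1-k)`, and `d 0 = 0`, every partial sum appearing under a
square root in `D_k` is nonnegative, and the matrices `D_k` satisfy the recurrence
`D_k† D_k - D_{k-1} D_{k-1}† = (c λ_k / 2) I` for all `1 ≤ k ≤ n` (with `D_0 = D_n = 0`). -/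
theorem Dmat_recurrence
    (n : ℕ) (hn : 2 ≤ n) (c : ℝ) (hc : 0 < c) (lam : ℕ → ℝ) (d : ℕ → ℕ)
    (hgap : ∀ k, 1 ≤ k → k ≤ n - 1 → lam k - lam (k + 1) = c)
    (hsym : ∀ k, 1 ≤ k → k ≤ n → lam k = -lam (n + 1 - k))
    (hd0 : d 0 = 0)
    (hdpos : ∀ k, 1 ≤ k → k ≤ n → 0 < d k)
    (hmono : ∀ k, 1 ≤ k → k ≤ n / 2 → d k ≤ d (k + 1))
    (hdsym : ∀ k, 1 ≤ k → k ≤ n → d k = d (n + 1 - k)) :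
    (∀ k, 1 ≤ k → k ≤ n - 1 → ∀ q : Fin (d k),
      0 ≤ ∑ i ∈ Finset.Icc (firstBigEnough d ((q : ℕ) + 1)) k, lam i) ∧
    (∀ k : ℕ, k + 1 ≤ n →
      (Dmat n c lam d (k + 1))ᴴ * Dmat n c lam d (k + 1) -
        Dmat n c lam d k * (Dmat n c lam d k)ᴴ =
      ((c * lam (k + 1) / 2 : ℝ) : ℂ) • 1) :=
  Dmat_recurrence_general n c hc lam d hgap hsym hd0 hmono hdsym
end

section
/- Let S1 be a self-adjoint operator on a finite-dimensional complex inner product space whose distinct eigenvalues λ_1 > λ_2 > … > λ_n (n ≥ 2) satisfy λ_k − λ_{k+1} = c > 0 for all k and λ_k = −λ_{n+1−k} for all k, and whose eigenspace dimensions d_k satisfy d_k ≤ d_{k+1} for 1 ≤ k ≤ ⌊n/2⌋ and d_k = d_{n+1−k} for all k. Then there exist self-adjoint operators S2 and S3 on the same space such that (S1, S2, S3) satisfies the su(2) relations with constant c. -/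
/-!
The eigenvalues of `S1` are forced to be `c (n + 1 - 2k) / 2`, the weights of the spin-`(n - 1)/2`
representation. Choose an orthonormal eigenbasis `b (k, i)`, `i < d_k`. Since `d` is symmetric and
unimodal, for each `i` the levels `k` with `i < d_k` form an interval `[a_i, n + 1 - a_i]`, so the
basis splits into strings, each of which carries a copy of the spin-`(n + 1 - 2 a_i)/2`
representation. Letting `A` act on every string as the standard raising operator gives
`[S1, A] = c A` and `[A, A*] = 2c S1`, and then `S2 = (A + A*)/2`, `S3 = -i (A - A*)/2` work.
-/

open Module Matrix

theorem exists_su2_of_raising {R : Type*} [Ring R] [StarRing R] [Algebra ℂ R] [StarModule ℂ R]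
    {c : ℝ} {S₁ A : R} (hS₁ : IsSelfAdjoint S₁)
    (hraise : S₁ * A - A * S₁ = (c : ℂ) • A)
    (hcomm : A * star A - star A * A = (2 * c : ℂ) • S₁) :
    ∃ S₂ S₃ : R, IsSelfAdjoint S₂ ∧ IsSelfAdjoint S₃ ∧
      S₂ * S₃ - S₃ * S₂ = (Complex.I * c) • S₁ ∧
      S₃ * S₁ - S₁ * S₃ = (Complex.I * c) • S₂ ∧
      S₁ * S₂ - S₂ * S₁ = (Complex.I * c) • S₃ := by
  have hlower : S₁ * star A - star A * S₁ = (-c : ℂ) • star A := by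
    have := congrArg star hraise
    simp only [star_sub, star_mul, star_smul, hS₁.star_eq, Complex.star_def,
      Complex.conj_ofReal] at this
    linear_combination (norm := module) -this
  refine ⟨(2⁻¹ : ℂ) • (A + star A), (-Complex.I / 2) • (A - star A), ?_, ?_, ?_, ?_, ?_⟩
  · simp [IsSelfAdjoint, star_smul, add_comm]
  · simp only [IsSelfAdjoint, star_smul, star_sub, star_star, Complex.star_def, map_div₀, map_neg,
      Complex.conj_I, map_ofNat]
    module
  · simp only [mul_add, add_mul, mul_sub, sub_mul, smul_mul_assoc, mul_smul_comm]
    linear_combination (norm := module) (Complex.I / 2) • hcomm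
  · simp only [mul_sub, sub_mul, smul_mul_assoc, mul_smul_comm]
    linear_combination (norm := module) (Complex.I / 2) • hraise - (Complex.I / 2) • hlower
  · simp only [mul_add, add_mul, smul_mul_assoc, mul_smul_comm]
    have hI : Complex.I * c * (-Complex.I / 2) = c / 2 := by
      linear_combination (-c / 2 : ℂ) * Complex.I_sq
    rw [smul_smul, hI]
    linear_combination (norm := module) (2⁻¹ : ℂ) • hraise + (2⁻¹ : ℂ) • hlower

theorem LinearMap.IsSymmetric.exists_orthonormalBasis_eigenvectors_sigma
    {𝕜 E : Type*} [RCLike 𝕜] [NormedAddCommGroup E] [InnerProductSpace 𝕜 E]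
    [FiniteDimensional 𝕜 E] {T : E →ₗ[𝕜] E} (hT : T.IsSymmetric)
    {κ : Type*} [Fintype κ] [DecidableEq κ] {f : κ → 𝕜} (hf : Function.Injective f)
    (hcover : ∀ μ, End.HasEigenvalue T μ → μ ∈ Set.range f) :
    ∃ b : OrthonormalBasis (Σ k, Fin (finrank 𝕜 (End.eigenspace T (f k)))) 𝕜 E,
      ∀ p, T (b p) = f p.1 • b p := by
  have hfam := hT.orthogonalFamily_eigenspaces.comp hf
  have hsup : ⨆ μ, End.eigenspace T μ ≤ ⨆ k, End.eigenspace T (f k) := by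
    refine iSup_le fun μ => ?_
    by_cases hμ : End.HasEigenvalue T μ
    · obtain ⟨k, rfl⟩ := hcover μ hμ
      exact le_iSup (fun k => End.eigenspace T (f k)) k
    · rw [End.hasEigenvalue_iff, not_not] at hμ
      exact hμ ▸ bot_le
  have hint : DirectSum.IsInternal fun k => End.eigenspace T (f k) := by
    refine hfam.isInternal_iff.mpr (eq_bot_iff.mpr ?_)
    exact hT.orthogonalComplement_iSup_eigenspaces_eq_bot ▸ Submodule.orthogonal_le hsup
  refine ⟨hint.collectedOrthonormalBasis hfam fun k => stdOrthonormalBasis 𝕜 _, fun p => ?_⟩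
  exact End.mem_eigenspace_iff.mp (hint.collectedOrthonormalBasis_mem hfam _ p)

theorem exists_raising_of_eigenbasis_matrix
    {𝕜 E ι : Type*} [RCLike 𝕜] [NormedAddCommGroup E] [InnerProductSpace 𝕜 E]
    [FiniteDimensional 𝕜 E] [Fintype ι] [DecidableEq ι]
    (b : OrthonormalBasis ι 𝕜 E) {T : E →ₗ[𝕜] E} {μ : ι → 𝕜} (hb : ∀ p, T (b p) = μ p • b p)
    {c d : 𝕜} {M : Matrix ι ι 𝕜}
    (hraise : diagonal μ * M - M * diagonal μ = c • M)
    (hcomm : M * Mᴴ - Mᴴ * M = d • diagonal μ) :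
    ∃ A : E →ₗ[𝕜] E, T * A - A * T = c • A ∧ A * star A - star A * A = d • T := by
  set φ := LinearMap.toMatrixOrthonormal b
  have hφT : φ T = diagonal μ := by
    ext p q
    rw [LinearMap.toMatrixOrthonormal_apply_apply, hb, inner_smul_right,
      orthonormal_iff_ite.mp b.orthonormal, diagonal_apply]
    split_ifs <;> simp_all
  refine ⟨φ.symm M, EquivLike.injective φ ?_, EquivLike.injective φ ?_⟩
  · rw [map_sub, map_mul, map_mul, map_smul, φ.apply_symm_apply, hφT, hraise]
  · rw [map_sub, map_mul, map_mul, map_smul, map_star, φ.apply_symm_apply, hφT,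
      star_eq_conjTranspose, hcomm]

section LadderMatrix

variable {𝕜 ι : Type*} [RCLike 𝕜] {pos : ι → ℕ × ℕ} {w : ℕ × ℕ → ℝ}

variable (𝕜 pos) in
/-- The basis vector at position `(k + 1, i)` is sent to `w (k, i)` times the one at `(k, i)`. -/
def ladderMatrix (w : ℕ × ℕ → ℝ) : Matrix ι ι 𝕜 :=
  fun p q => if pos q = ((pos p).1 + 1, (pos p).2) then (w (pos p) : 𝕜) else 0

theorem diagonal_mul_ladderMatrix_sub [Fintype ι] [DecidableEq ι] {ν : ℕ → ℝ} {c : ℝ}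
    (hν : ∀ k, ν k - ν (k + 1) = c) :
    diagonal (fun p => (ν (pos p).1 : 𝕜)) * ladderMatrix 𝕜 pos w -
      ladderMatrix 𝕜 pos w * diagonal (fun p => (ν (pos p).1 : 𝕜)) =
        (c : 𝕜) • ladderMatrix 𝕜 pos w := by
  ext p q
  simp only [Matrix.sub_apply, diagonal_mul, mul_diagonal, Matrix.smul_apply, ladderMatrix,
    smul_eq_mul]
  split_ifs with h
  · rw [h, ← hν]; push_cast; ring
  · simp

theorem conjTranspose_ladderMatrix :
    (ladderMatrix 𝕜 pos w)ᴴ = (ladderMatrix 𝕜 pos w)ᵀ := by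
  ext p q
  simp only [conjTranspose_apply, transpose_apply, ladderMatrix]
  split_ifs <;> simp

theorem ladderMatrix_mul_conjTranspose [Fintype ι] [DecidableEq ι]
    (hpos : Function.Injective pos)
    (hw : ∀ p, w (pos p) ≠ 0 → ((pos p).1 + 1, (pos p).2) ∈ Set.range pos) :
    ladderMatrix 𝕜 pos w * (ladderMatrix 𝕜 pos w)ᴴ = diagonal fun p => (w (pos p) ^ 2 : 𝕜) := by
  ext p p'
  simp only [conjTranspose_ladderMatrix, mul_apply, transpose_apply, ladderMatrix, diagonal_apply,
    ite_zero_mul_ite_zero]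
  by_cases hx : ((pos p).1 + 1, (pos p).2) ∈ Set.range pos
  · obtain ⟨q₀, hq₀⟩ := hx
    rw [Fintype.sum_eq_single q₀ fun q hq => if_neg fun h => hq (hpos (h.1.trans hq₀.symm))]
    by_cases hpp : p = p'
    · subst hpp
      simp [hq₀, sq]
    · refine (if_neg fun h => hpp (hpos ?_)).trans (if_neg hpp).symm
      have := h.1.symm.trans h.2
      simp only [Prod.mk.injEq, add_left_inj] at this
      exact Prod.ext this.1 this.2
  · have hw0 : w (pos p) = 0 := by_contra (hx ∘ hw p)
    simp [hw0]

theorem conjTranspose_mul_ladderMatrix [Fintype ι] [DecidableEq ι]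
    (hpos : Function.Injective pos)
    (hlevel : ∀ p, 1 ≤ (pos p).1)
    (hw : ∀ x, w x ≠ 0 → (x.1 + 1, x.2) ∈ Set.range pos → x ∈ Set.range pos) :
    (ladderMatrix 𝕜 pos w)ᴴ * ladderMatrix 𝕜 pos w =
      diagonal fun p => (w ((pos p).1 - 1, (pos p).2) ^ 2 : 𝕜) := by
  ext p p'
  simp only [conjTranspose_ladderMatrix, mul_apply, transpose_apply, ladderMatrix, diagonal_apply,
    ite_zero_mul_ite_zero]
  have hpred : ∀ q, pos p = ((pos q).1 + 1, (pos q).2) → pos q = ((pos p).1 - 1, (pos p).2) := by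
    intro q h
    simp [h]
  by_cases hx : ((pos p).1 - 1, (pos p).2) ∈ Set.range pos
  · obtain ⟨q₀, hq₀⟩ := hx
    rw [Fintype.sum_eq_single q₀
      fun q hq => if_neg fun h => hq (hpos ((hpred q h.1).trans hq₀.symm))]
    by_cases hpp : p = p'
    · subst hpp
      have hsucc : pos p = ((pos q₀).1 + 1, (pos q₀).2) := by
        rw [hq₀]
        exact Prod.ext (by have := hlevel p; simp only; omega) rfl
      rw [if_pos ⟨hsucc, hsucc⟩, if_pos rfl, ← hq₀, sq]
    · refine (if_neg fun h => hpp (hpos ?_)).trans (if_neg hpp).symm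
      rw [h.1, h.2]
  · have hsucc : (((pos p).1 - 1) + 1, (pos p).2) ∈ Set.range pos := by
      convert Set.mem_range_self p using 1
      exact Prod.ext (by have := hlevel p; simp only; omega) rfl
    have hw0 : w ((pos p).1 - 1, (pos p).2) = 0 := by_contra fun h => hx (hw _ h hsucc)
    refine (Finset.sum_eq_zero fun q _ => ?_).trans (by simp [hw0])
    split_ifs with h
    · simp [hpred q h.1, hw0]
    · rfl

end LadderMatrix

theorem eq_of_gap_of_antisymm {lam : ℕ → ℝ} {n : ℕ} {c : ℝ}
    (hgap : ∀ k, 1 ≤ k → k ≤ n - 1 → lam k - lam (k + 1) = c)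
    (hsym : ∀ k, 1 ≤ k → k ≤ n → lam k = -lam (n + 1 - k)) {k : ℕ} (hk : 1 ≤ k) (hkn : k ≤ n) :
    lam k = c * (n + 1 - 2 * k) / 2 := by
  have hlin : ∀ k, 1 ≤ k → k ≤ n → lam k = lam 1 - (k - 1) * c := by
    intro k hk
    induction k, hk using Nat.le_induction with
    | base => intro; ring
    | succ k hk ih =>
      intro hkn
      have := hgap k hk (by omega)
      rw [ih (by omega)] at this
      push_cast
      linarith
  have h1n : lam 1 = -lam n := by simpa using hsym 1 le_rfl (hk.trans hkn)
  rw [hlin n (hk.trans hkn) le_rfl] at h1n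
  rw [hlin k hk hkn]
  linarith

section Strings

variable {n : ℕ} {D : ℕ → ℕ}

def IsSymmUnimodal (n : ℕ) (D : ℕ → ℕ) : Prop :=
  (∀ k, 1 ≤ k → k ≤ n / 2 → D k ≤ D (k + 1)) ∧ ∀ k, 1 ≤ k → k ≤ n → D k = D (n + 1 - k)

def levelDiagram (n : ℕ) (D : ℕ → ℕ) : Set (ℕ × ℕ) := {x | 1 ≤ x.1 ∧ x.1 ≤ n ∧ x.2 < D x.1}

noncomputable def stringStart (D : ℕ → ℕ) (i : ℕ) : ℕ := sInf {m | 1 ≤ m ∧ i < D m}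

theorem IsSymmUnimodal.mem_levelDiagram_iff (hD : IsSymmUnimodal n D) {k i : ℕ} :
    (k, i) ∈ levelDiagram n D ↔
      1 ≤ stringStart D i ∧ stringStart D i ≤ k ∧ k + stringStart D i ≤ n + 1 := by
  obtain ⟨hmono, hsym⟩ := hD
  have hmono' : MonotoneOn D (Set.Icc 1 ((n + 1) / 2)) := by
    refine monotoneOn_of_le_succ Set.ordConnected_Icc fun a _ ha hsa => ?_
    rw [Order.succ_eq_add_one] at hsa ⊢
    exact hmono a ha.1 (by have := hsa.2; omega)
  constructor
  · rintro ⟨hk, hkn, hi⟩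
    have hmem : k ∈ {m | 1 ≤ m ∧ i < D m} := ⟨hk, hi⟩
    have hle : stringStart D i ≤ n + 1 - k :=
      Nat.sInf_le ⟨by omega, hsym k hk hkn ▸ hi⟩
    exact ⟨(Nat.sInf_mem ⟨k, hmem⟩).1, Nat.sInf_le hmem, by omega⟩
  · rintro ⟨h1, hle, hle'⟩
    obtain ⟨ha, hi⟩ : 1 ≤ stringStart D i ∧ i < D (stringStart D i) :=
      Nat.sInf_mem (Nat.nonempty_of_pos_sInf h1)
    refine ⟨by omega, by omega, hi.trans_le ?_⟩
    rcases le_total k (n + 1 - k) with h | h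
    · exact hmono' ⟨ha, by omega⟩ ⟨by omega, by omega⟩ hle
    · rw [hsym k (by omega) (by omega)]
      exact hmono' ⟨ha, by omega⟩ ⟨by omega, by omega⟩ (by omega)

def levelPos (n : ℕ) (D : ℕ → ℕ) (p : Σ k : Fin n, Fin (D (k + 1))) : ℕ × ℕ := (p.1 + 1, p.2)

theorem levelPos_injective : Function.Injective (levelPos n D) := by
  rintro ⟨⟨k, hk⟩, i, hi⟩ ⟨⟨l, hl⟩, j, hj⟩ h
  simp only [levelPos, Prod.mk.injEq, add_left_inj] at h
  obtain ⟨rfl, rfl⟩ := h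
  rfl

theorem range_levelPos : Set.range (levelPos n D) = levelDiagram n D := by
  ext ⟨k, i⟩
  constructor
  · rintro ⟨⟨⟨k, hk⟩, i, hi⟩, h⟩
    simp only [levelPos, Prod.mk.injEq] at h
    obtain ⟨rfl, rfl⟩ := h
    exact ⟨by omega, by omega, hi⟩
  · rintro ⟨hk, hkn, hi⟩
    refine ⟨⟨⟨k - 1, by omega⟩, i, by simpa [Nat.sub_add_cancel hk] using hi⟩, ?_⟩
    simp [levelPos, Nat.sub_add_cancel hk]

end Strings

section Weights

variable {c : ℝ} {n : ℕ} {D : ℕ → ℕ}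

/-- For `x = (k, i)`: the string of `i` occupies the levels `a, …, n + 1 - a`, `a = stringStart D i`,
and this is the spin-`j` raising coefficient `c √((j - m)(j + m + 1))` from level `k + 1` to `k`,
where `j = (n + 1 - 2a)/2` and `m = j - (k + 1 - a)`. -/
noncomputable def ladderWeight (c : ℝ) (n : ℕ) (D : ℕ → ℕ) (x : ℕ × ℕ) : ℝ :=
  c * √(((x.1 + 1 - stringStart D x.2) * (n + 1 - (x.1 + stringStart D x.2)) : ℕ) : ℝ)

theorem ladderWeight_sq (x : ℕ × ℕ) :
    ladderWeight c n D x ^ 2 =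
      c ^ 2 * (((x.1 + 1 - stringStart D x.2) * (n + 1 - (x.1 + stringStart D x.2)) : ℕ) : ℝ) := by
  rw [ladderWeight, mul_pow, Real.sq_sqrt (Nat.cast_nonneg _)]

theorem stringStart_le_of_ladderWeight_ne_zero {k i : ℕ} (hw : ladderWeight c n D (k, i) ≠ 0) :
    stringStart D i ≤ k ∧ k + stringStart D i ≤ n := by
  by_contra h
  have hzero : (k + 1 - stringStart D i) * (n + 1 - (k + stringStart D i)) = 0 := by
    rcases Nat.lt_or_ge k (stringStart D i) with h' | h'
    · simp [Nat.sub_eq_zero_of_le (Nat.succ_le_of_lt h')]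
    · simp [Nat.sub_eq_zero_of_le (show n + 1 ≤ k + stringStart D i by omega)]
  exact hw (by simp [ladderWeight, hzero])

theorem IsSymmUnimodal.succ_mem_levelDiagram (hD : IsSymmUnimodal n D) {k i : ℕ}
    (hx : (k, i) ∈ levelDiagram n D) (hw : ladderWeight c n D (k, i) ≠ 0) :
    (k + 1, i) ∈ levelDiagram n D := by
  have := stringStart_le_of_ladderWeight_ne_zero hw
  rw [hD.mem_levelDiagram_iff] at hx ⊢
  omega

theorem IsSymmUnimodal.mem_levelDiagram (hD : IsSymmUnimodal n D) {k i : ℕ}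
    (hw : ladderWeight c n D (k, i) ≠ 0) (hx : (k + 1, i) ∈ levelDiagram n D) :
    (k, i) ∈ levelDiagram n D := by
  have := stringStart_le_of_ladderWeight_ne_zero hw
  rw [hD.mem_levelDiagram_iff] at hx ⊢
  omega

theorem IsSymmUnimodal.ladderWeight_sq_sub (hD : IsSymmUnimodal n D) {k i : ℕ}
    (hx : (k, i) ∈ levelDiagram n D) :
    ladderWeight c n D (k, i) ^ 2 - ladderWeight c n D (k - 1, i) ^ 2 =
      2 * c * (c * (n + 1 - 2 * k) / 2) := by
  obtain ⟨ha, hak, hakn⟩ := hD.mem_levelDiagram_iff.mp hx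
  rw [ladderWeight_sq, ladderWeight_sq]
  push_cast [Nat.sub_add_cancel (ha.trans hak), Nat.cast_sub hak,
    Nat.cast_sub (show stringStart D i ≤ k + 1 by omega),
    Nat.cast_sub (show k + stringStart D i ≤ n + 1 by omega),
    Nat.cast_sub (show k - 1 + stringStart D i ≤ n + 1 by omega),
    Nat.cast_sub (show 1 ≤ k by omega)]
  ring

end Weights

theorem LinearMap.IsSymmetric.exists_raising_of_isSymmUnimodal
    {𝕜 E : Type*} [RCLike 𝕜] [NormedAddCommGroup E] [InnerProductSpace 𝕜 E]
    [FiniteDimensional 𝕜 E] {T : E →ₗ[𝕜] E} (hT : T.IsSymmetric) {n : ℕ} {c : ℝ} (hc : c ≠ 0)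
    {lam : ℕ → ℝ} (hlam : ∀ k, 1 ≤ k → k ≤ n → lam k = c * (n + 1 - 2 * k) / 2)
    (hall : ∀ μ, End.HasEigenvalue T μ → ∃ k, 1 ≤ k ∧ k ≤ n ∧ μ = ((lam k : ℝ) : 𝕜))
    (hD : IsSymmUnimodal n fun k => finrank 𝕜 (End.eigenspace T ((lam k : ℝ) : 𝕜))) :
    ∃ A : E →ₗ[𝕜] E, T * A - A * T = (c : 𝕜) • A ∧ A * star A - star A * A = (2 * c : 𝕜) • T := by
  set D := fun k => finrank 𝕜 (End.eigenspace T ((lam k : ℝ) : 𝕜))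
  have hinj : Function.Injective fun k : Fin n => ((lam (k + 1) : ℝ) : 𝕜) := by
    intro k l hkl
    have h := RCLike.ofReal_injective hkl
    rw [hlam _ (by omega) (by omega), hlam _ (by omega) (by omega)] at h
    have hlk : c * ((l : ℝ) - k) = 0 := by push_cast at h; linarith
    exact Fin.ext (by exact_mod_cast (sub_eq_zero.mp ((mul_eq_zero.mp hlk).resolve_left hc)).symm)
  obtain ⟨b, hb⟩ := hT.exists_orthonormalBasis_eigenvectors_sigma hinj fun μ hμ => by
    obtain ⟨k, hk, hkn, rfl⟩ := hall μ hμ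
    exact ⟨⟨k - 1, by omega⟩, by simp [Nat.sub_add_cancel hk]⟩
  set pos := levelPos n D
  have hb' : ∀ p, T (b p) = ((c * (n + 1 - 2 * (pos p).1) / 2 : ℝ) : 𝕜) • b p := fun p => by
    rw [hb, ← hlam _ (by simp [pos, levelPos]) (by simp [pos, levelPos])]
    rfl
  refine exists_raising_of_eigenbasis_matrix b hb' (M := ladderMatrix 𝕜 pos (ladderWeight c n D))
    (diagonal_mul_ladderMatrix_sub (ν := fun k : ℕ => c * (n + 1 - 2 * k) / 2)
      fun k => by push_cast; ring) ?_
  have hmem : ∀ p, pos p ∈ levelDiagram n D := fun p => range_levelPos ▸ Set.mem_range_self p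
  rw [ladderMatrix_mul_conjTranspose levelPos_injective
      fun p hw => range_levelPos ▸ hD.succ_mem_levelDiagram (hmem p) hw,
    conjTranspose_mul_ladderMatrix levelPos_injective (fun p => Nat.le_add_left 1 _)
      fun x hw hx => range_levelPos ▸ hD.mem_levelDiagram hw (range_levelPos ▸ hx),
    diagonal_sub, ← diagonal_smul]
  congr 1
  ext p
  simp only [Pi.smul_apply, smul_eq_mul]
  exact_mod_cast hD.ladderWeight_sq_sub (hmem p)

theorem su2_generators_exist_general
    {V : Type*} [NormedAddCommGroup V] [InnerProductSpace ℂ V] [FiniteDimensional ℂ V]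
    (n : ℕ) (c : ℝ) (hc : 0 < c) (lam : ℕ → ℝ)
    (hgap : ∀ k, 1 ≤ k → k ≤ n - 1 → lam k - lam (k + 1) = c)
    (hsym : ∀ k, 1 ≤ k → k ≤ n → lam k = -lam (n + 1 - k))
    (S1 : V →ₗ[ℂ] V) (h1 : S1.IsSymmetric)
    (hall : ∀ μ : ℂ, Module.End.HasEigenvalue S1 μ → ∃ k, 1 ≤ k ∧ k ≤ n ∧ μ = ((lam k : ℝ) : ℂ))
    (hmono : ∀ k, 1 ≤ k → k ≤ n / 2 →
      Module.finrank ℂ (Module.End.eigenspace S1 ((lam k : ℝ) : ℂ)) ≤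
        Module.finrank ℂ (Module.End.eigenspace S1 ((lam (k + 1) : ℝ) : ℂ)))
    (hdsym : ∀ k, 1 ≤ k → k ≤ n →
      Module.finrank ℂ (Module.End.eigenspace S1 ((lam k : ℝ) : ℂ)) =
        Module.finrank ℂ (Module.End.eigenspace S1 ((lam (n + 1 - k) : ℝ) : ℂ))) :
    ∃ S2 S3 : V →ₗ[ℂ] V, S2.IsSymmetric ∧ S3.IsSymmetric ∧
      S2 * S3 - S3 * S2 = (Complex.I * (c : ℂ)) • S1 ∧
      S3 * S1 - S1 * S3 = (Complex.I * (c : ℂ)) • S2 ∧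
      S1 * S2 - S2 * S1 = (Complex.I * (c : ℂ)) • S3 := by
  obtain ⟨A, hraise, hcomm⟩ := h1.exists_raising_of_isSymmUnimodal hc.ne'
    (fun k hk hkn => eq_of_gap_of_antisymm hgap hsym hk hkn) hall ⟨hmono, hdsym⟩
  obtain ⟨S2, S3, h2, h3, hrel⟩ :=
    exists_su2_of_raising (S1.isSymmetric_iff_isSelfAdjoint.mp h1) hraise hcomm
  exact ⟨S2, S3, S2.isSymmetric_iff_isSelfAdjoint.mpr h2, S3.isSymmetric_iff_isSelfAdjoint.mpr h3,
    hrel⟩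

/-- Let `S1` be self-adjoint with distinct eigenvalues
`λ 1 > … > λ n` (`n ≥ 2`) that are homogeneously gapped with gap `c > 0` and symmetric
(`λ k = -λ (n+1-k)`), and suppose the eigenspace dimensions `d k` satisfy
`d k ≤ d (k+1)` for `1 ≤ k ≤ ⌊n/2⌋` and `d k = d (n+1-k)` for all `k`. Then there exist
self-adjoint operators `S2, S3` such that `(S1, S2, S3)` satisfies the su(2) relations
with constant `c`. -/
theorem su2_generators_exist
    {V : Type*} [NormedAddCommGroup V] [InnerProductSpace ℂ V] [FiniteDimensional ℂ V]
    (n : ℕ) (hn : 2 ≤ n) (c : ℝ) (hc : 0 < c) (lam : ℕ → ℝ)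
    (hgap : ∀ k, 1 ≤ k → k ≤ n - 1 → lam k - lam (k + 1) = c)
    (hsym : ∀ k, 1 ≤ k → k ≤ n → lam k = -lam (n + 1 - k))
    (S1 : V →ₗ[ℂ] V) (h1 : S1.IsSymmetric)
    (heig : ∀ k, 1 ≤ k → k ≤ n → Module.End.HasEigenvalue S1 ((lam k : ℝ) : ℂ))
    (hall : ∀ μ : ℂ, Module.End.HasEigenvalue S1 μ → ∃ k, 1 ≤ k ∧ k ≤ n ∧ μ = ((lam k : ℝ) : ℂ))
    (hmono : ∀ k, 1 ≤ k → k ≤ n / 2 →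
      Module.finrank ℂ (Module.End.eigenspace S1 ((lam k : ℝ) : ℂ)) ≤
        Module.finrank ℂ (Module.End.eigenspace S1 ((lam (k + 1) : ℝ) : ℂ)))
    (hdsym : ∀ k, 1 ≤ k → k ≤ n →
      Module.finrank ℂ (Module.End.eigenspace S1 ((lam k : ℝ) : ℂ)) =
        Module.finrank ℂ (Module.End.eigenspace S1 ((lam (n + 1 - k) : ℝ) : ℂ))) :
    ∃ S2 S3 : V →ₗ[ℂ] V, S2.IsSymmetric ∧ S3.IsSymmetric ∧
      S2 * S3 - S3 * S2 = (Complex.I * (c : ℂ)) • S1 ∧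
      S3 * S1 - S1 * S3 = (Complex.I * (c : ℂ)) • S2 ∧
      S1 * S2 - S2 * S1 = (Complex.I * (c : ℂ)) • S3 :=
  su2_generators_exist_general n c hc lam hgap hsym S1 h1 hall hmono hdsym
end

section
/- Let N ≥ 1 and p ∈ [0, 1]. For each bitstring k ∈ {0,1}^N define the dephasing Kraus operator S_k := p^{(N − h(k))/2} (1 − p)^{h(k)/2} · ⊗_{i=1}^N σz^{k_i} on (ℂ²)^{⊗N}, where h(k) is the Hamming weight of k, σz^0 = I and σz^1 = σz. Let S_x := Σ_{i=1}^N σx^{(i)} and S_z := Σ_{i=1}^N σz^{(i)}. Then Σ_{l, k ∈ {0,1}^N} S_l · ⟨l| S_x |k⟩ · S_k = 2√(p(1−p)) · S_z, where ⟨l| S_x |k⟩ denotes the matrix element of S_x between the computational basis vectors |l⟩ and |k⟩ (equal to 1 if k differs from l in exactly one bit, and 0 otherwise). -/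
open Matrix

def pauliX : Matrix (Fin 2) (Fin 2) ℂ := !![0, 1; 1, 0]
def pauliZ : Matrix (Fin 2) (Fin 2) ℂ := !![1, 0; 0, -1]

def pauliAt (N : ℕ) (i : ℕ) (A : Matrix (Fin 2) (Fin 2) ℂ) :
    Matrix (Fin N → Fin 2) (Fin N → Fin 2) ℂ :=
  Matrix.of fun x y =>
    ∏ j : Fin N, if (j : ℕ) = i then A (x j) (y j) else (if x j = y j then 1 else 0)

def kronN (N : ℕ) (A : Fin N → Matrix (Fin 2) (Fin 2) ℂ) :
    Matrix (Fin N → Fin 2) (Fin N → Fin 2) ℂ :=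
  Matrix.of fun x y => ∏ i : Fin N, A i (x i) (y i)

def hamWt (N : ℕ) (k : Fin N → Fin 2) : ℕ := ∑ i : Fin N, (k i : ℕ)

noncomputable def krausOp (N : ℕ) (p : ℝ) (k : Fin N → Fin 2) :
    Matrix (Fin N → Fin 2) (Fin N → Fin 2) ℂ :=
  ((Real.sqrt (p ^ (N - hamWt N k)) * Real.sqrt ((1 - p) ^ hamWt N k) : ℝ) : ℂ) •
    kronN N (fun i => if k i = 1 then pauliZ else 1)

/- ### auxiliary lemmas -/

lemma fin2_cases (a : Fin 2) : a = 0 ∨ a = 1 := by omega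

lemma my_sqrt_pow (x : ℝ) (h : 0 ≤ x) (n : ℕ) : Real.sqrt (x ^ n) = Real.sqrt x ^ n := by
  induction n with
  | zero => simp
  | succ n ih => rw [pow_succ, Real.sqrt_mul (pow_nonneg h n), ih, pow_succ]

lemma pauliZ_mul_pauliZ : pauliZ * pauliZ = 1 := by
  ext i j
  fin_cases i <;> fin_cases j <;>
    simp [pauliZ, Matrix.mul_apply, Fin.sum_univ_two, Matrix.one_apply]

noncomputable def wf (p : ℝ) (a : Fin 2) : ℝ :=
  if a = 1 then Real.sqrt (1 - p) else Real.sqrt p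

lemma krausOp_eq (N : ℕ) (p : ℝ) (hp0 : 0 ≤ p) (hp1 : p ≤ 1) (k : Fin N → Fin 2) :
    krausOp N p k = (((∏ j : Fin N, wf p (k j)) : ℝ) : ℂ) •
      kronN N (fun j => if k j = 1 then pauliZ else 1) := by
  unfold krausOp
  congr 2
  have hsum : (∑ j : Fin N, (1 - (k j : ℕ))) + hamWt N k = N := by
    rw [hamWt, ← Finset.sum_add_distrib]
    have h1 : ∀ j : Fin N, (1 - (k j : ℕ)) + (k j : ℕ) = 1 := by
      intro j; have := (k j).is_le; omega
    simp [h1]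
  have hNh : N - hamWt N k = ∑ j : Fin N, (1 - (k j : ℕ)) := by omega
  rw [hNh, my_sqrt_pow p hp0, my_sqrt_pow (1 - p) (by linarith)]
  rw [← Finset.prod_pow_eq_pow_sum, hamWt, ← Finset.prod_pow_eq_pow_sum,
    ← Finset.prod_mul_distrib]
  apply Finset.prod_congr rfl
  intro j _
  rcases fin2_cases (k j) with hk | hk <;> simp [wf, hk]

lemma kronN_mul (N : ℕ) (A B : Fin N → Matrix (Fin 2) (Fin 2) ℂ) :
    kronN N A * kronN N B = kronN N (fun i => A i * B i) := by
  ext x z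
  simp only [kronN, Matrix.mul_apply, Matrix.of_apply]
  rw [Finset.prod_univ_sum (fun _ : Fin N => (Finset.univ : Finset (Fin 2)))
    (fun i j => A i (x i) j * B i j (z i)), Fintype.piFinset_univ]
  exact Finset.sum_congr rfl fun y _ => Finset.prod_mul_distrib.symm

def flipAt (N : ℕ) (i : Fin N) (k : Fin N → Fin 2) : Fin N → Fin 2 :=
  Function.update k i (1 - k i)

lemma pauliX_entry (N : ℕ) (i : Fin N) (l k : Fin N → Fin 2) :
    pauliAt N i.1 pauliX l k = if l = flipAt N i k then 1 else 0 := by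
  by_cases h : l = flipAt N i k
  · subst h
    simp only [if_pos rfl, pauliAt, Matrix.of_apply]
    apply Finset.prod_eq_one
    intro j _
    by_cases hj : j = i
    · subst hj
      simp only [flipAt, Function.update_self, if_pos rfl]
      rcases fin2_cases (k j) with hk | hk <;> simp [pauliX, hk]
    · have hv : (j : ℕ) ≠ (i : ℕ) := fun hc => hj (Fin.ext hc)
      simp [flipAt, Function.update_of_ne hj, hv]
  · rw [if_neg h]
    simp only [pauliAt, Matrix.of_apply]
    have : ∃ j : Fin N, l j ≠ flipAt N i k j := by
      by_contra hc
      push_neg at hc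
      exact h (funext hc)
    obtain ⟨j, hj⟩ := this
    apply Finset.prod_eq_zero (Finset.mem_univ j)
    by_cases hji : j = i
    · subst hji
      simp only [flipAt, Function.update_self] at hj
      simp only [if_pos rfl]
      have hlk : l j = k j := by
        rcases fin2_cases (k j) with hk | hk <;> rcases fin2_cases (l j) with hl | hl <;>
          simp [hk, hl] at hj ⊢
      rw [hlk]
      rcases fin2_cases (k j) with hk | hk <;> simp [pauliX, hk]
    · have hv : (j : ℕ) ≠ (i : ℕ) := fun hc => hji (Fin.ext hc)
      simp only [flipAt, Function.update_of_ne hji] at hj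
      simp [hv, hj]

lemma kron_flip (N : ℕ) (i : Fin N) (k : Fin N → Fin 2) :
    kronN N (fun j => if flipAt N i k j = 1 then pauliZ else 1) *
      kronN N (fun j => if k j = 1 then pauliZ else 1) = pauliAt N i.1 pauliZ := by
  rw [kronN_mul]
  have hfun : (fun j => (if flipAt N i k j = 1 then pauliZ else 1) *
      (if k j = 1 then pauliZ else 1)) = fun j => if j = i then pauliZ else 1 := by
    funext j
    by_cases hj : j = i
    · subst hj
      simp only [flipAt, Function.update_self, if_pos rfl]
      rcases fin2_cases (k j) with hk | hk <;> simp [hk, pauliZ_mul_pauliZ]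
    · simp only [flipAt, Function.update_of_ne hj, if_neg hj]
      by_cases hk : k j = 1 <;> simp [hk, pauliZ_mul_pauliZ]
  rw [hfun]
  ext x y
  simp only [kronN, pauliAt, Matrix.of_apply]
  apply Finset.prod_congr rfl
  intro j _
  by_cases hj : j = i
  · subst hj; simp
  · have hv : (j : ℕ) ≠ (i : ℕ) := fun hc => hj (Fin.ext hc)
    simp [hj, hv, Matrix.one_apply]

lemma coeff_sum (N : ℕ) (p : ℝ) (hp0 : 0 ≤ p) (hp1 : p ≤ 1) (i : Fin N) :
    ∑ k : Fin N → Fin 2, (∏ j : Fin N, wf p (flipAt N i k j)) * (∏ j : Fin N, wf p (k j))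
      = 2 * Real.sqrt p * Real.sqrt (1 - p) := by
  have step1 : ∀ k : Fin N → Fin 2,
      (∏ j : Fin N, wf p (flipAt N i k j)) * (∏ j : Fin N, wf p (k j))
      = ∏ j : Fin N, (wf p (if j = i then 1 - k j else k j) * wf p (k j)) := by
    intro k
    rw [← Finset.prod_mul_distrib]
    apply Finset.prod_congr rfl
    intro j _
    by_cases hj : j = i
    · subst hj; simp [flipAt]
    · simp [flipAt, Function.update_of_ne hj, hj]
  simp only [step1]
  have hps := Finset.prod_univ_sum (fun _ : Fin N => (Finset.univ : Finset (Fin 2)))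
    (fun j a => wf p (if j = i then 1 - a else a) * wf p a)
  rw [Fintype.piFinset_univ] at hps
  rw [← hps]
  have step2 : ∀ j : Fin N, (∑ a : Fin 2, wf p (if j = i then 1 - a else a) * wf p a)
      = if j = i then 2 * Real.sqrt p * Real.sqrt (1 - p) else 1 := by
    intro j
    rw [Fin.sum_univ_two]
    by_cases hj : j = i
    · simp only [if_pos hj]
      norm_num [wf]
      ring
    · simp only [if_neg hj]
      simp only [wf]
      norm_num
      rw [Real.mul_self_sqrt hp0, Real.mul_self_sqrt (by linarith : (0:ℝ) ≤ 1 - p)]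
      ring
  calc (∏ j : Fin N, ∑ a : Fin 2, wf p (if j = i then 1 - a else a) * wf p a)
      = ∏ j : Fin N, (if j = i then 2 * Real.sqrt p * Real.sqrt (1 - p) else 1) :=
        Finset.prod_congr rfl fun j _ => step2 j
    _ = 2 * Real.sqrt p * Real.sqrt (1 - p) := by
        rw [Finset.prod_ite_eq' Finset.univ i
          (fun _ => 2 * Real.sqrt p * Real.sqrt (1 - p)), if_pos (Finset.mem_univ i)]

/-- With `S_x := Σ σx^{(i)}`, `S_z := Σ σz^{(i)}` and the dephasing
Kraus operators `S_k`, one has `Σ_{l,k} S_l ⟨l|S_x|k⟩ S_k = 2√(p(1-p)) S_z`. -/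
theorem kraus_sandwich_Sx (N : ℕ) (hN : 1 ≤ N) (p : ℝ) (hp0 : 0 ≤ p) (hp1 : p ≤ 1) :
    ∑ l : Fin N → Fin 2, ∑ k : Fin N → Fin 2,
      ((∑ i : Fin N, pauliAt N i.1 pauliX) l k) • (krausOp N p l * krausOp N p k) =
      ((2 * Real.sqrt (p * (1 - p)) : ℝ) : ℂ) • ∑ i : Fin N, pauliAt N i.1 pauliZ := by
  have hq : (0 : ℝ) ≤ 1 - p := by linarith
  have key : ∀ l k : Fin N → Fin 2,
      ((∑ i : Fin N, pauliAt N i.1 pauliX) l k) • (krausOp N p l * krausOp N p k)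
      = ∑ i : Fin N, (if l = flipAt N i k then (1:ℂ) else 0) •
          (krausOp N p l * krausOp N p k) := by
    intro l k
    rw [Matrix.sum_apply,
      Finset.sum_congr rfl (fun i _ => pauliX_entry N i l k), Finset.sum_smul]
  simp only [key]
  rw [Finset.sum_comm]
  have step1 : ∀ k : Fin N → Fin 2,
      (∑ l : Fin N → Fin 2, ∑ i : Fin N, (if l = flipAt N i k then (1:ℂ) else 0) •
          (krausOp N p l * krausOp N p k))
      = ∑ i : Fin N, krausOp N p (flipAt N i k) * krausOp N p k := by
    intro k
    rw [Finset.sum_comm]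
    apply Finset.sum_congr rfl
    intro i _
    simp only [ite_smul, one_smul, zero_smul]
    rw [Finset.sum_ite_eq' Finset.univ (flipAt N i k)
      (fun l => krausOp N p l * krausOp N p k), if_pos (Finset.mem_univ _)]
  rw [Finset.sum_congr rfl fun k _ => step1 k, Finset.sum_comm]
  have step2 : ∀ i : Fin N,
      (∑ k : Fin N → Fin 2, krausOp N p (flipAt N i k) * krausOp N p k)
      = ((2 * Real.sqrt p * Real.sqrt (1 - p) : ℝ) : ℂ) • pauliAt N i.1 pauliZ := by
    intro i
    have hterm : ∀ k : Fin N → Fin 2,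
        krausOp N p (flipAt N i k) * krausOp N p k
        = ((((∏ j : Fin N, wf p (flipAt N i k j)) * ∏ j : Fin N, wf p (k j) : ℝ)) : ℂ) •
            pauliAt N i.1 pauliZ := by
      intro k
      rw [krausOp_eq N p hp0 hp1, krausOp_eq N p hp0 hp1,
        Matrix.smul_mul, Matrix.mul_smul, kron_flip, smul_smul, ← Complex.ofReal_mul]
    rw [Finset.sum_congr rfl fun k _ => hterm k, ← Finset.sum_smul]
    congr 1
    rw [← Complex.ofReal_sum, coeff_sum N p hp0 hp1 i]
  rw [Finset.sum_congr rfl fun i _ => step2 i, ← Finset.smul_sum]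
  congr 2
  rw [Real.sqrt_mul hp0, mul_assoc]
end
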